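/- Revolving door property (Theorem 1): for all N K k : ℕ with 1 ≤ k ≤ K and k < N, let cs be the k-th entry of kcombsRevol K ((List.range' 1 N).reverse). Then for every i with i + 1 < cs.length, the finsets A := (cs[i]).toFinset and B := (cs[i+1]).toFinset satisfy (A \ B).card = 1 and (B \ A).card = 1; moreover the same holds for the pair consisting of the last element and the first element of cs. In other words, every pair of cyclically adjacent k-combinations produced by the generator differs by removing exactly one element and inserting exactly one other element. -/

import Mathlib

variable {α : Type*}

/-- One step of the revolving-door K-combination generator (for `css` of length K+1). -/
def forRevol (x : α) (css : List (List (List α))) : List (List (List α)) :=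
  [[[]]] ++ (List.range (css.length - 1)).map
    (fun i => css.getD (i + 1) [] ++ ((css.getD i []).map (· ++ [x])).reverse)

/-- Revolving-door K-combination generator. -/
def kcombsRevol (K : ℕ) : List α → List (List (List α))
  | [] => [[[]]] ++ List.replicate K []
  | x :: xs => forRevol x (kcombsRevol K xs)

/-- Adjacency: the two combinations differ by one removal and one insertion. -/
def RevAdj (a b : List ℕ) : Prop :=
  (a.toFinset \ b.toFinset).card = 1 ∧ (b.toFinset \ a.toFinset).card = 1

lemma revAdj_symm {a b : List ℕ} (h : RevAdj a b) : RevAdj b a := ⟨h.2, h.1⟩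

lemma length_kcombsRevol (K : ℕ) (l : List α) : (kcombsRevol K l).length = K + 1 := by
  induction l with
  | nil => simp [kcombsRevol]
  | cons x xs ih => simp [kcombsRevol, forRevol, ih]

lemma kcombsRevol_getD_zero (K : ℕ) (l : List α) :
    (kcombsRevol K l).getD 0 [] = [[]] := by
  cases l <;> rfl

lemma kcombsRevol_getD_succ (K : ℕ) (x : α) (l : List α) (j : ℕ) (hj : j + 1 ≤ K) :
    (kcombsRevol K (x :: l)).getD (j + 1) [] =
      (kcombsRevol K l).getD (j + 1) [] ++
        (((kcombsRevol K l).getD j []).map (· ++ [x])).reverse := by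
  have hlen := length_kcombsRevol K l
  show (forRevol x (kcombsRevol K l)).getD (j + 1) [] = _
  unfold forRevol
  rw [hlen]
  simp only [Nat.add_sub_cancel, List.singleton_append, List.getD_cons_succ]
  rw [List.getD_eq_getElem _ _ (by simpa using hj)]
  simp

/-- Abbreviation: the k-th entry of the generator applied to `[n, n-1, …, 1]`. -/
def RD (K n k : ℕ) : List (List ℕ) :=
  (kcombsRevol K ((List.range' 1 n).reverse)).getD k []

lemma RD_zero (K n : ℕ) : RD K n 0 = [[]] := kcombsRevol_getD_zero K _

lemma getD_replicate_nil {β : Type*} (K j : ℕ) : (List.replicate K ([] : List β)).getD j [] = [] := by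
  rcases lt_or_ge j K with h | h
  · rw [List.getD_eq_getElem _ _ (by simpa using h)]; simp
  · rw [List.getD_eq_default _ _ (by simpa using h)]

lemma RD_zero_n (K j : ℕ) : RD K 0 (j + 1) = [] := by
  show (kcombsRevol K (([] : List ℕ))).getD (j + 1) [] = []
  simp only [kcombsRevol, List.singleton_append, List.getD_cons_succ]
  exact getD_replicate_nil K j

lemma RD_succ_n (K n j : ℕ) (hj : j + 1 ≤ K) :
    RD K (n + 1) (j + 1) =
      RD K n (j + 1) ++ ((RD K n j).map (· ++ [n + 1])).reverse := by
  show (kcombsRevol K ((List.range' 1 (n+1)).reverse)).getD (j+1) [] = _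
  rw [List.range'_1_concat, List.reverse_append, Nat.add_comm 1 n]
  exact kcombsRevol_getD_succ K (n + 1) _ j hj

lemma toFinset_concat (a : List ℕ) (x : ℕ) :
    (a ++ [x]).toFinset = insert x a.toFinset := by
  ext v; simp [or_comm]

lemma insert_sdiff_insert' {A B : Finset ℕ} {x : ℕ} (ha : x ∉ A) :
    (insert x A) \ (insert x B) = A \ B := by
  ext v
  simp only [Finset.mem_sdiff, Finset.mem_insert]
  constructor
  · rintro ⟨rfl | h1, h2⟩
    · exact absurd (Or.inl rfl) h2
    · exact ⟨h1, fun h => h2 (Or.inr h)⟩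
  · rintro ⟨h1, h2⟩
    refine ⟨Or.inr h1, ?_⟩
    rintro (rfl | h)
    · exact ha h1
    · exact h2 h

lemma revAdj_append {a b : List ℕ} {x : ℕ} (ha : x ∉ a) (hb : x ∉ b) (h : RevAdj a b) :
    RevAdj (a ++ [x]) (b ++ [x]) := by
  have ha' : x ∉ a.toFinset := by simpa using ha
  have hb' : x ∉ b.toFinset := by simpa using hb
  refine ⟨?_, ?_⟩
  · rw [toFinset_concat, toFinset_concat, insert_sdiff_insert' ha']; exact h.1
  · rw [toFinset_concat, toFinset_concat, insert_sdiff_insert' hb']; exact h.2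

lemma chain'_map_concat (x : ℕ) :
    ∀ L : List (List ℕ), (∀ c ∈ L, x ∉ c) → List.Chain' RevAdj L →
      List.Chain' RevAdj (L.map (· ++ [x])) := by
  intro L
  induction L with
  | nil => intro _ _; exact List.isChain_nil
  | cons a L ih =>
    intro hmem hch
    rw [List.map_cons]
    cases L with
    | nil => exact List.isChain_singleton _
    | cons b L =>
      rw [List.map_cons]
      simp only [List.Chain', List.isChain_cons_cons] at hch
      simp only [List.Chain', List.isChain_cons_cons]
      refine ⟨?_, ?_⟩
      · exact revAdj_append (hmem a (by simp)) (hmem b (by simp)) hch.1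
      · have := ih (fun c hc => hmem c (by simp [hc])) hch.2
        rwa [List.map_cons] at this
    
/-- The main invariant, proved by induction on `n`. -/
lemma RD_invariant (K : ℕ) : ∀ n j, j + 1 ≤ K →
    (n < j + 1 → RD K n (j + 1) = []) ∧
    (j + 1 ≤ n → (RD K n (j + 1)).head? = some (List.range' 1 (j + 1)) ∧
      (RD K n (j + 1)).getLast? = some (List.range' 1 j ++ [n])) ∧
    (∀ c ∈ RD K n (j + 1), ∀ v ∈ c, 1 ≤ v ∧ v ≤ n) ∧
    List.Chain' RevAdj (RD K n (j + 1)) := by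
  intro n
  induction n with
  | zero =>
    intro j hj
    refine ⟨fun _ => RD_zero_n K j, fun h => absurd h (by omega), ?_, ?_⟩
    · rw [RD_zero_n]; simp
    · rw [RD_zero_n]; simp [List.Chain']
  | succ n ih =>
    intro j hj
    have hrec := RD_succ_n K n j hj
    by_cases hjn : j ≤ n
    case neg =>
      -- j + 1 > n + 1 : everything is empty
      have h1 : RD K n (j + 1) = [] := (ih j hj).1 (by omega)
      have h2 : RD K n j = [] := by
        cases j with
        | zero => omega
        | succ j' => exact (ih j' (by omega)).1 (by omega)
      have hres : RD K (n + 1) (j + 1) = [] := by rw [hrec, h1, h2]; simp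
      refine ⟨fun _ => hres, fun h => absurd h (by omega), ?_, ?_⟩
      · rw [hres]; simp
      · rw [hres]; simp [List.Chain']
    case pos =>
      -- facts about L2 := RD K n j
      have hL2head : (RD K n j).head? = some (List.range' 1 j) := by
        cases j with
        | zero => rw [RD_zero K n]; rfl
        | succ j' => exact (((ih j' (by omega)).2.1) (by omega)).1
      have hL2mem : ∀ c ∈ RD K n j, ∀ v ∈ c, 1 ≤ v ∧ v ≤ n := by
        cases j with
        | zero => rw [RD_zero K n]; simp
        | succ j' => exact (ih j' (by omega)).2.2.1
      have hL2chain : List.Chain' RevAdj (RD K n j) := by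
        cases j with
        | zero => rw [RD_zero K n]; simp [List.Chain']
        | succ j' => exact (ih j' (by omega)).2.2.2
      have hL2notmem : ∀ c ∈ RD K n j, (n + 1) ∉ c := by
        intro c hc hv
        have := hL2mem c hc _ hv
        omega
      -- facts about the mapped-and-reversed part M
      set M : List (List ℕ) := ((RD K n j).map (· ++ [n + 1])).reverse with hM
      have hMchain : List.Chain' RevAdj M := by
        simp only [hM, List.Chain', List.isChain_reverse]
        exact ((chain'_map_concat (n+1) (RD K n j) hL2notmem hL2chain : List.IsChain _ _).imp
          (fun a b h => revAdj_symm h))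
      have hMlast : M.getLast? = some (List.range' 1 j ++ [n + 1]) := by
        rw [hM, List.getLast?_reverse, List.head?_map, hL2head]; rfl
      have hMhead : M.head? = Option.map (· ++ [n + 1]) (RD K n j).getLast? := by
        rw [hM, List.head?_reverse, List.getLast?_map]
      have hMmem : ∀ c ∈ M, ∀ v ∈ c, 1 ≤ v ∧ v ≤ n + 1 := by
        intro c hc v hv
        rw [hM, List.mem_reverse, List.mem_map] at hc
        obtain ⟨c', hc', rfl⟩ := hc
        rcases List.mem_append.mp hv with h | h
        · have := hL2mem c' hc' v h; omega
        · simp at h; omega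
      by_cases hjn1 : j + 1 ≤ n
      case pos =>
        -- both parts are nonempty
        obtain ⟨hL1head, hL1last⟩ := (ih j hj).2.1 hjn1
        have hL1mem := (ih j hj).2.2.1
        have hL1chain := (ih j hj).2.2.2
        have hL2last : (RD K n j).getLast? =
            some (if j = 0 then ([] : List ℕ) else List.range' 1 (j - 1) ++ [n]) := by
          cases j with
          | zero => rw [RD_zero K n]; rfl
          | succ j' =>
            simp only [Nat.succ_sub_one, if_neg (Nat.succ_ne_zero j')]
            exact (((ih j' (by omega)).2.1) (by omega)).2
        refine ⟨fun h => absurd h (by omega), fun _ => ⟨?_, ?_⟩, ?_, ?_⟩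
        · rw [hrec, List.head?_append, hL1head]; rfl
        · rw [hrec, List.getLast?_append, hMlast]; rfl
        · intro c hc v hv
          rw [hrec] at hc
          rcases List.mem_append.mp hc with h | h
          · have := hL1mem c h v hv; omega
          · exact hMmem c h v hv
        · rw [hrec]; simp only [List.Chain', List.isChain_append]
          refine ⟨hL1chain, hMchain, ?_⟩
          intro x hx y hy
          rw [hL1last] at hx
          rw [hMhead, hL2last] at hy
          simp only [Option.mem_def, Option.some.injEq, Option.map_some] at hx hy
          subst hx; subst hy
          cases j with
          | zero =>
            -- RevAdj [n] [n+1]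
            simp only [List.range'_zero, List.nil_append, reduceIte]
            constructor
            · have h : ([n] : List ℕ).toFinset \ ([n+1] : List ℕ).toFinset = {n} := by
                ext v
                simp only [List.toFinset_cons, List.toFinset_nil, LawfulSingleton.insert_empty_eq,
                  Finset.mem_sdiff, Finset.mem_singleton]
                omega
              rw [h]; simp
            · have h : ([n+1] : List ℕ).toFinset \ ([n] : List ℕ).toFinset = {n+1} := by
                ext v
                simp only [List.toFinset_cons, List.toFinset_nil, LawfulSingleton.insert_empty_eq,
                  Finset.mem_sdiff, Finset.mem_singleton]
                omega
              rw [h]; simp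
          | succ j' =>
            simp only [if_neg (Nat.succ_ne_zero j'), Nat.succ_sub_one]
            constructor
            · have : (List.range' 1 (j'+1) ++ [n]).toFinset \
                  ((List.range' 1 j' ++ [n]) ++ [n+1]).toFinset = {j' + 1} := by
                ext v
                simp [List.mem_range'_1]
                omega
              rw [this]; simp
            · have : ((List.range' 1 j' ++ [n]) ++ [n+1]).toFinset \
                  (List.range' 1 (j'+1) ++ [n]).toFinset = {n + 1} := by
                ext v
                simp [List.mem_range'_1]
                omega
              rw [this]; simp
      case neg =>
        -- j = n : left part is empty, result is M
        have hj_eq : j = n := by omega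
        have h1 : RD K n (j + 1) = [] := (ih j hj).1 (by omega)
        have hres : RD K (n + 1) (j + 1) = M := by rw [hrec, h1, hM]; simp
        have hL2last : (RD K n j).getLast? =
            some (if j = 0 then ([] : List ℕ) else List.range' 1 (j - 1) ++ [n]) := by
          cases j with
          | zero => rw [RD_zero K n]; rfl
          | succ j' =>
            simp only [Nat.succ_sub_one, if_neg (Nat.succ_ne_zero j')]
            exact (((ih j' (by omega)).2.1) (by omega)).2
        refine ⟨fun h => absurd h (by omega), fun _ => ⟨?_, ?_⟩, ?_, ?_⟩
        · rw [hres, hMhead, hL2last]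
          cases j with
          | zero =>
            simp only [if_pos rfl, Option.map_some]
            have hn0 : n = 0 := by omega
            subst hn0
            simp
          | succ j' =>
            simp only [if_neg (Nat.succ_ne_zero j'), Nat.succ_sub_one, Option.map_some,
              Option.some.injEq]
            have hn : n = j' + 1 := by omega
            subst hn
            rw [List.range'_1_concat, List.range'_1_concat]
            simp [Nat.add_comm]
        · rw [hres, hMlast, hj_eq]
        · intro c hc v hv
          rw [hres] at hc
          exact hMmem c hc v hv
        · rw [hres]; exact hMchain

/-- Revolving door property: cyclically adjacent combinations differ by removing
one element and inserting one other element. -/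
theorem kcombsRevol_revolving_door (N K k : ℕ) (hk1 : 1 ≤ k) (hkK : k ≤ K)
    (hkN : k < N) :
    ∀ cs : List (List ℕ),
      cs = (kcombsRevol K ((List.range' 1 N).reverse)).getD k [] →
      ((∀ i, i + 1 < cs.length →
          (((cs.getD i []).toFinset \ (cs.getD (i + 1) []).toFinset).card = 1 ∧
            ((cs.getD (i + 1) []).toFinset \ (cs.getD i []).toFinset).card = 1)) ∧
        (((cs.getLastD []).toFinset \ (cs.headD []).toFinset).card = 1 ∧
          ((cs.headD []).toFinset \ (cs.getLastD []).toFinset).card = 1)) := by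
  intro cs hcs
  obtain ⟨j, rfl⟩ : ∃ j, k = j + 1 := ⟨k - 1, by omega⟩
  have hcs' : cs = RD K N (j + 1) := hcs
  obtain ⟨-, hh, -, hchain⟩ := RD_invariant K N j hkK
  obtain ⟨hhead, hlast⟩ := hh (by omega)
  rw [← hcs'] at hhead hlast
  rw [← hcs'] at hchain
  constructor
  · intro i hi
    have hadj := List.isChain_iff_getElem.mp hchain i (by omega)
    rw [List.getD_eq_getElem _ _ (by omega), List.getD_eq_getElem _ _ (by omega)]
    exact hadj
  · have h1 : cs.headD [] = List.range' 1 (j + 1) := by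
      rw [List.headD_eq_head?, hhead]; rfl
    have h2 : cs.getLastD [] = List.range' 1 j ++ [N] := by
      rw [List.getLastD_eq_getLast?, hlast]; rfl
    rw [h1, h2]
    constructor
    · have : (List.range' 1 j ++ [N]).toFinset \ (List.range' 1 (j+1)).toFinset = {N} := by
        ext v
        simp [List.mem_range'_1]
        omega
      rw [this]; simp
    · have : (List.range' 1 (j+1)).toFinset \ (List.range' 1 j ++ [N]).toFinset = {j + 1} := by
        ext v
        simp [List.mem_range'_1]
        omega
      rw [this]; simp
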